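/- arXiv:1602.02681 — 2 statements merged into one kernel-verified Lean document; each statement's English description precedes it below -/
import Mathlib

section
/- For any coprime positive integers h and k, the Dedekind sums satisfy the reciprocity law s(h,k) + s(k,h) = (1/12)·(h/k + 1/(hk) + k/h) − 1/4. -/
/-
Write `h μ = k ⌊h μ / k⌋ + (h μ mod k)`. Since `μ ↦ h μ mod k` permutes the residues mod `k`, the
sawtooth values `B̄₁(h μ / k)` sum to zero, and then
`k s(h, k) = h (k - 1)(2k - 1) / 6 - Σ_{μ<k} μ ⌊h μ / k⌋ - k (k - 1) / 4`.
The reciprocity law thus amounts to the closed form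
`12 (h Σ_{μ<k} μ ⌊h μ / k⌋ + k Σ_{ν<h} ν ⌊k ν / h⌋) = (h - 1)(k - 1)(8 h k - h - k - 1)`,
which comes from counting the lattice points of `[0, k) × [0, h)` with weight `2ν`, by rows below
the line `k ν = h μ` and by columns above it: by coprimality no point with `ν > 0` lies on the line.
As the residues `h μ mod k` again run through `0, …, k - 1`, squaring
`h μ mod k = h μ - k ⌊h μ / k⌋` and summing turns the row count, a sum of `⌊h μ / k⌋²`, back into
`Σ μ ⌊h μ / k⌋`.
-/

open Real

/-- The first periodic Bernoulli polynomial (sawtooth function):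
`B̄₁(x) = x − ⌊x⌋ − 1/2` if `x ∉ ℤ`, and `B̄₁(x) = 0` if `x ∈ ℤ`. -/
noncomputable def sawtooth (x : ℝ) : ℝ :=
  open scoped Classical in
  if ∃ n : ℤ, x = (n : ℝ) then 0 else Int.fract x - 1/2

/-- The classical Dedekind sum `s(h,k) = Σ_{r=0}^{k−1} B̄₁(hr/k)·B̄₁(r/k)`. -/
noncomputable def dedekindSum (h k : ℕ) : ℝ :=
  ∑ r ∈ Finset.range k, sawtooth ((h : ℝ) * r / k) * sawtooth ((r : ℝ) / k)

open Finset

theorem sum_range_sq_mul_six {R : Type*} [CommRing R] (n : ℕ) :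
    (∑ i ∈ range n, (i : R) ^ 2) * 6 = n * (n - 1) * (2 * n - 1) := by
  induction n with
  | zero => simp
  | succ n ih => rw [sum_range_succ, add_mul, ih]; push_cast; ring

theorem sum_range_cast_mul_two {R : Type*} [CommRing R] (n : ℕ) :
    (∑ i ∈ range n, (i : R)) * 2 = n * (n - 1) := by
  induction n with
  | zero => simp
  | succ n ih => rw [sum_range_succ, add_mul, ih]; push_cast; ring

theorem sum_range_comp_mul_mod {M : Type*} [AddCommMonoid M] {h k : ℕ} (hco : h.Coprime k)
    (f : ℕ → M) : ∑ r ∈ range k, f (h * r % k) = ∑ r ∈ range k, f r := by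
  have hmaps : Set.MapsTo (fun r => h * r % k) (range k) (range k) := fun r hr =>
    mem_range.2 (Nat.mod_lt _ (pos_of_ne_zero (by rintro rfl; simp at hr)))
  have hinj : Set.InjOn (fun r => h * r % k) (range k) := fun a ha b hb hab =>
    (Nat.ModEq.cancel_left_of_coprime hco.symm hab).eq_of_lt_of_lt (mem_range.1 ha) (mem_range.1 hb)
  exact sum_nbij _ hmaps hinj (surjOn_of_injOn_of_card_le _ hmaps hinj le_rfl) fun _ _ => rfl

theorem range_filter_mul_le {a b n : ℕ} (ha : 0 < a) (hb : b / a < n) :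
    (range n).filter (fun x => a * x ≤ b) = range (b / a + 1) := by
  ext x
  simp only [mem_filter, mem_range, Nat.lt_succ_iff, Nat.le_div_iff_mul_le ha, mul_comm x]
  constructor
  · exact And.right
  · intro hx
    exact ⟨lt_of_le_of_lt ((Nat.le_div_iff_mul_le ha).2 (by rwa [mul_comm])) hb, hx⟩

theorem Nat.Coprime.mul_ne_mul_of_lt {h k μ ν : ℕ} (hco : h.Coprime k) (hμ : μ < k)
    (hν : 0 < ν) : k * ν ≠ h * μ := by
  intro heq
  have hdvd : k ∣ μ := hco.symm.dvd_of_dvd_mul_left (heq ▸ Dvd.intro ν rfl)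
  obtain rfl : μ = 0 := Nat.eq_zero_of_dvd_of_lt hdvd hμ
  simp [hν.ne', (pos_of_gt hμ).ne'] at heq

theorem sum_div_mul_succ_add_two_mul_sum {h k : ℕ} (hco : h.Coprime k) (hh : 0 < h) (hk : 0 < k) :
    ∑ μ ∈ range k, h * μ / k * (h * μ / k + 1) + 2 * ∑ ν ∈ range h, ν * (k * ν / h + 1) =
      k * (h * (h - 1)) := by
  have rows : ∀ μ ∈ range k,
      ∑ ν ∈ range h, (if k * ν ≤ h * μ then 2 * ν else 0) = h * μ / k * (h * μ / k + 1) := by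
    intro μ hμ
    have hq : h * μ / k < h := (Nat.div_lt_iff_lt_mul hk).2 (by nlinarith [mem_range.1 hμ])
    rw [← sum_filter, range_filter_mul_le hk hq, ← mul_sum, mul_comm, sum_range_id_mul_two]
    simp [mul_comm]
  have cols : ∀ ν ∈ range h,
      ∑ μ ∈ range k, (if h * μ ≤ k * ν then 2 * ν else 0) = 2 * (ν * (k * ν / h + 1)) := by
    intro ν hν
    have hq : k * ν / h < k := (Nat.div_lt_iff_lt_mul hh).2 (by nlinarith [mem_range.1 hν])
    rw [← sum_filter, range_filter_mul_le hh hq, sum_const, card_range, smul_eq_mul]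
    ring
  have split : ∀ μ ∈ range k, ∀ ν ∈ range h,
      (if k * ν ≤ h * μ then 2 * ν else 0) + (if h * μ ≤ k * ν then 2 * ν else 0) = 2 * ν := by
    intro μ hμ ν _
    rcases Nat.eq_zero_or_pos ν with rfl | hν
    · simp
    · have := hco.mul_ne_mul_of_lt (mem_range.1 hμ) hν
      split_ifs <;> omega
  calc _ = ∑ μ ∈ range k, ∑ ν ∈ range h, ((if k * ν ≤ h * μ then 2 * ν else 0) +
        (if h * μ ≤ k * ν then 2 * ν else 0)) := by
        rw [← sum_congr rfl rows, mul_sum, ← sum_congr rfl cols, sum_comm (s := range h),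
          ← sum_add_distrib]
        simp only [sum_add_distrib]
    _ = k * (h * (h - 1)) := by
        rw [sum_congr rfl fun μ hμ => sum_congr rfl (split μ hμ), sum_const, card_range,
          smul_eq_mul, ← mul_sum, mul_comm 2, sum_range_id_mul_two]

def weightedFloorSum (h k : ℕ) : ℕ := ∑ μ ∈ range k, μ * (h * μ / k)

theorem mul_sum_div_add_sum {h k : ℕ} (hco : h.Coprime k) :
    k * ∑ μ ∈ range k, h * μ / k + ∑ μ ∈ range k, μ = h * ∑ μ ∈ range k, μ := by
  conv_lhs => rw [← sum_range_comp_mul_mod hco fun r => r]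
  rw [mul_sum, mul_sum, ← sum_add_distrib]
  exact sum_congr rfl fun μ _ => Nat.div_add_mod (h * μ) k

theorem sq_mul_sum_div_sq_add {h k : ℕ} (hco : h.Coprime k) :
    k ^ 2 * ∑ μ ∈ range k, (h * μ / k) ^ 2 + h ^ 2 * ∑ μ ∈ range k, μ ^ 2 =
      2 * h * k * weightedFloorSum h k + ∑ μ ∈ range k, μ ^ 2 := by
  conv_rhs => rw [← sum_range_comp_mul_mod hco (· ^ 2)]
  rw [weightedFloorSum, mul_sum, mul_sum, mul_sum, ← sum_add_distrib, ← sum_add_distrib]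
  refine sum_congr rfl fun μ _ => ?_
  have hdiv := Nat.div_add_mod (h * μ) k
  set q := h * μ / k
  set r := h * μ % k
  rw [show h ^ 2 * μ ^ 2 = (h * μ) ^ 2 by ring,
    show 2 * h * k * (μ * q) = 2 * k * q * (h * μ) by ring, ← hdiv]
  ring

theorem twelve_mul_weightedFloorSum_add {h k : ℕ} (hco : h.Coprime k) (hh : 0 < h) (hk : 0 < k) :
    12 * ((h : ℤ) * weightedFloorSum h k + k * weightedFloorSum k h) =
      (h - 1) * (k - 1) * (8 * h * k - h - k - 1) := by
  have lattice := sum_div_mul_succ_add_two_mul_sum hco hh hk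
  have lin := mul_sum_div_add_sum hco
  have squares := sq_mul_sum_div_sq_add hco
  simp only [mul_add, mul_one, sum_add_distrib, ← sq] at lattice
  simp only [weightedFloorSum] at squares ⊢
  zify [hh, hk] at lattice lin squares ⊢
  have s1k := sum_range_cast_mul_two (R := ℤ) k
  have s1h := sum_range_cast_mul_two (R := ℤ) h
  have s2k := sum_range_sq_mul_six (R := ℤ) k
  refine mul_left_cancel₀ (show (k : ℤ) ≠ 0 by positivity) ?_
  linear_combination 6 * k ^ 2 * lattice - 6 * squares - 6 * k * lin - 6 * k ^ 2 * s1h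
    + (h ^ 2 - 1) * s2k + 3 * k * (1 - h) * s1k

theorem sawtooth_zero : sawtooth 0 = 0 :=
  if_pos ⟨0, Int.cast_zero.symm⟩

theorem sawtooth_add_intCast (x : ℝ) (m : ℤ) : sawtooth (x + m) = sawtooth x := by
  have hint : (∃ n : ℤ, x + m = n) ↔ ∃ n : ℤ, x = n :=
    ⟨fun ⟨n, hn⟩ => ⟨n - m, by push_cast; linarith⟩, fun ⟨n, hn⟩ => ⟨n + m, by push_cast; linarith⟩⟩
  unfold sawtooth
  rw [Int.fract_add_intCast]
  split_ifs <;> tauto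

theorem sawtooth_natCast_div_mod (n k : ℕ) :
    sawtooth ((n : ℝ) / k) = sawtooth (((n % k : ℕ) : ℝ) / k) := by
  rcases Nat.eq_zero_or_pos k with rfl | hk
  · simp
  have : (n : ℝ) / k = ((n % k : ℕ) : ℝ) / k + ((n / k : ℕ) : ℤ) := by
    rw [Int.cast_natCast, div_add' _ _ _ (by positivity), ← Nat.cast_mul, ← Nat.cast_add,
      mul_comm, Nat.mod_add_div]
  rw [this, sawtooth_add_intCast]

theorem sawtooth_natCast_div {n k : ℕ} (hk : 0 < k) (hn : ¬ k ∣ n) :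
    sawtooth ((n : ℝ) / k) = n / k - (n / k : ℕ) - 1 / 2 := by
  have hint : ¬ ∃ m : ℤ, (n : ℝ) / k = m := by
    rintro ⟨m, hm⟩
    rw [div_eq_iff (by positivity)] at hm
    exact hn (Int.natCast_dvd_natCast.1 ⟨m, by exact_mod_cast hm.trans (mul_comm _ _)⟩)
  rw [sawtooth, if_neg hint, Int.fract_div_natCast_eq_div_natCast_mod, sub_left_inj,
    eq_sub_iff_add_eq, div_add' _ _ _ (by positivity), ← Nat.cast_mul, ← Nat.cast_add,
    mul_comm, Nat.mod_add_div]

theorem sawtooth_natCast_div_of_lt {μ k : ℕ} (hμ : 0 < μ) (hμk : μ < k) :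
    sawtooth ((μ : ℝ) / k) = μ / k - 1 / 2 := by
  rw [sawtooth_natCast_div (hμ.trans hμk) (Nat.not_dvd_of_pos_of_lt hμ hμk),
    Nat.div_eq_of_lt hμk]
  simp

theorem sum_range_sawtooth_div (k : ℕ) : ∑ μ ∈ range k, sawtooth ((μ : ℝ) / k) = 0 := by
  rcases Nat.eq_zero_or_pos k with rfl | hk
  · simp
  have hterm : ∀ μ ∈ range k,
      sawtooth ((μ : ℝ) / k) = (μ / k - 1 / 2) + if μ = 0 then 1 / 2 else 0 := by
    intro μ hμ
    rcases Nat.eq_zero_or_pos μ with rfl | hμ0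
    · simp [sawtooth_zero]
    · rw [sawtooth_natCast_div_of_lt hμ0 (mem_range.1 hμ), if_neg hμ0.ne', add_zero]
  have hid := sum_range_cast_mul_two (R := ℝ) k
  rw [sum_congr rfl hterm, sum_add_distrib, sum_ite_eq', if_pos (mem_range.2 hk), sum_sub_distrib,
    ← sum_div, sum_const, card_range, nsmul_eq_mul]
  field_simp
  linear_combination hid

theorem sum_range_sawtooth_mul_div {h k : ℕ} (hco : h.Coprime k) :
    ∑ μ ∈ range k, sawtooth ((h : ℝ) * μ / k) = 0 := by
  calc _ = ∑ μ ∈ range k, sawtooth (((h * μ % k : ℕ) : ℝ) / k) :=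
        sum_congr rfl fun μ _ => by rw [← Nat.cast_mul, sawtooth_natCast_div_mod]
    _ = 0 := (sum_range_comp_mul_mod hco fun r => sawtooth ((r : ℝ) / k)).trans
        (sum_range_sawtooth_div k)

theorem natCast_mul_dedekindSum {h k : ℕ} (hco : h.Coprime k) :
    (k : ℝ) * dedekindSum h k = ∑ μ ∈ range k, μ * sawtooth ((h : ℝ) * μ / k) := by
  have hterm : ∀ μ ∈ range k, (k : ℝ) * (sawtooth ((h : ℝ) * μ / k) * sawtooth ((μ : ℝ) / k)) =
      μ * sawtooth ((h : ℝ) * μ / k) - k / 2 * sawtooth ((h : ℝ) * μ / k) := by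
    intro μ hμ
    have hk : (k : ℝ) ≠ 0 := Nat.cast_ne_zero.2 (Nat.ne_zero_of_lt (mem_range.1 hμ))
    rcases Nat.eq_zero_or_pos μ with rfl | hμ0
    · simp [sawtooth_zero]
    · rw [sawtooth_natCast_div_of_lt hμ0 (mem_range.1 hμ)]
      field_simp
  rw [dedekindSum, mul_sum, sum_congr rfl hterm, sum_sub_distrib, ← mul_sum,
    sum_range_sawtooth_mul_div hco, mul_zero, sub_zero]

theorem sum_range_mul_sawtooth_mul_div {h k : ℕ} (hco : h.Coprime k) (hk : 0 < k) :
    ∑ μ ∈ range k, (μ : ℝ) * sawtooth ((h : ℝ) * μ / k) =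
      h * (k - 1) * (2 * k - 1) / 6 - weightedFloorSum h k - k * (k - 1) / 4 := by
  have hterm : ∀ μ ∈ range k, (μ : ℝ) * sawtooth ((h : ℝ) * μ / k) =
      h / k * μ ^ 2 - (μ * (h * μ / k) : ℕ) - μ / 2 := by
    intro μ hμ
    rcases Nat.eq_zero_or_pos μ with rfl | hμ0
    · simp
    have hndvd : ¬ k ∣ h * μ := fun hdvd =>
      Nat.not_dvd_of_pos_of_lt hμ0 (mem_range.1 hμ) (hco.symm.dvd_of_dvd_mul_left hdvd)
    rw [← Nat.cast_mul, sawtooth_natCast_div hk hndvd]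
    push_cast
    ring
  have s1 := sum_range_cast_mul_two (R := ℝ) k
  have s2 := sum_range_sq_mul_six (R := ℝ) k
  rw [sum_congr rfl hterm, sum_sub_distrib, sum_sub_distrib, ← mul_sum, ← sum_div, weightedFloorSum,
    Nat.cast_sum]
  field_simp
  linear_combination 8 * h * s2 - 12 * k * s1

theorem dedekind_reciprocity (h k : ℕ) (hh : 0 < h) (hk : 0 < k)
    (hco : Nat.Coprime h k) :
    dedekindSum h k + dedekindSum k h =
      1/12 * ((h : ℝ)/k + 1/((h : ℝ)*k) + (k : ℝ)/h) - 1/4 := by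
  have hsk := natCast_mul_dedekindSum hco
  have hsh := natCast_mul_dedekindSum hco.symm
  rw [sum_range_mul_sawtooth_mul_div hco hk] at hsk
  rw [sum_range_mul_sawtooth_mul_div hco.symm hh] at hsh
  have key : (12 : ℝ) * (h * weightedFloorSum h k + k * weightedFloorSum k h) =
      (h - 1) * (k - 1) * (8 * h * k - h - k - 1) := by
    exact_mod_cast twelve_mul_weightedFloorSum_add hco hh hk
  field_simp
  linear_combination 48 * h * hsk + 48 * k * hsh - 4 * key
end

section
/- (Popoviciu) Let a and b be coprime positive integers. Then for every nonnegative integer n, the number of representations of n as a nonnegative integer combination of a and b is #{(x,y) ∈ ℤ² : x ≥ 0, y ≥ 0, ax + by = n} = n/(ab) − {b⁻¹n/a} − {a⁻¹n/b} + 1, where a⁻¹ is any integer with a⁻¹a ≡ 1 (mod b) and b⁻¹ is any integer with b⁻¹b ≡ 1 (mod a). -/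
open Real

/-!
Let `r ∈ [0, a)` be the residue of `b⁻¹ n` modulo `a` and write `n = a m + b r`. The
nonnegative solutions of `a x + b y = n` are then `(m - b t, r + a t)` for `0 ≤ t ≤ ⌊m / b⌋`,
and `n ≥ 0` forces `m > -b`, so there are exactly `⌊m / b⌋ + 1` of them. On the other side,
`{b⁻¹ n / a} = r / a`, `a⁻¹ n ≡ m (mod b)` gives `{a⁻¹ n / b} = {m / b}`, and
`n / (ab) = m / b + r / a`, so the right-hand side is `m / b - {m / b} + 1 = ⌊m / b⌋ + 1`.
-/

section LinearDiophantine

variable {a b : ℤ}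

theorem exists_eq_of_mul_add_mul_eq (hab : IsCoprime a b) (ha : a ≠ 0) {x y x₀ y₀ : ℤ}
    (h : a * x + b * y = a * x₀ + b * y₀) : ∃ t, x = x₀ - b * t ∧ y = y₀ + a * t := by
  have hdvd : a ∣ b * (y - y₀) := ⟨x₀ - x, by linear_combination h⟩
  obtain ⟨t, ht⟩ := hab.dvd_of_dvd_mul_left hdvd
  exact ⟨t, mul_left_cancel₀ ha (by linear_combination h - b * ht), by linear_combination ht⟩

theorem nonneg_solutions_eq_image (ha : 0 < a) (hb : 0 < b) (hab : IsCoprime a b)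
    {x₀ y₀ : ℤ} (hy₀ : 0 ≤ y₀) (hy₀a : y₀ < a) :
    {p : ℤ × ℤ | 0 ≤ p.1 ∧ 0 ≤ p.2 ∧ a * p.1 + b * p.2 = a * x₀ + b * y₀} =
      (fun t : ℤ => (x₀ - b * t, y₀ + a * t)) '' Set.Icc 0 (x₀ / b) := by
  ext ⟨x, y⟩
  simp only [Set.mem_ofPred_eq, Set.mem_image, Set.mem_Icc, Prod.mk.injEq,
    Int.le_ediv_iff_mul_le hb]
  constructor
  · rintro ⟨hx, hy, h⟩
    obtain ⟨t, rfl, rfl⟩ := exists_eq_of_mul_add_mul_eq hab ha.ne' h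
    refine ⟨t, ⟨?_, by linarith⟩, rfl, rfl⟩
    by_contra! ht
    nlinarith
  · rintro ⟨t, ⟨ht, htx⟩, rfl, rfl⟩
    exact ⟨by linarith, by positivity, by ring⟩

theorem ncard_nonneg_solutions (ha : 0 < a) (hb : 0 < b) (hab : IsCoprime a b)
    {x₀ y₀ : ℤ} (hy₀ : 0 ≤ y₀) (hy₀a : y₀ < a) (hn : 0 ≤ a * x₀ + b * y₀) :
    ({p : ℤ × ℤ | 0 ≤ p.1 ∧ 0 ≤ p.2 ∧ a * p.1 + b * p.2 = a * x₀ + b * y₀}.ncard : ℤ) =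
      x₀ / b + 1 := by
  have hinj : Function.Injective fun t : ℤ => (x₀ - b * t, y₀ + a * t) := fun s t hst =>
    mul_left_cancel₀ ha.ne' (by linarith [congrArg Prod.snd hst])
  have hx₀ : -1 * b ≤ x₀ := by nlinarith
  rw [nonneg_solutions_eq_image ha hb hab hy₀ hy₀a, Set.ncard_image_of_injective _ hinj,
    ← Finset.coe_Icc, Set.ncard_coe_finset, Int.card_Icc_of_le, sub_zero]
  linarith [(Int.le_ediv_iff_mul_le hb).2 hx₀]

theorem exists_eq_mul_add_mul_mul_emod {a b b' : ℤ} (hb' : b' * b ≡ 1 [ZMOD a]) (n : ℤ) :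
    ∃ m, n = a * m + b * (b' * n % a) := by
  have : b * (b' * n % a) ≡ n [ZMOD a] := calc
    b * (b' * n % a) ≡ b * (b' * n) [ZMOD a] := (Int.mod_modEq _ _).mul_left _
    _ = b' * b * n := by ring
    _ ≡ 1 * n [ZMOD a] := hb'.mul_right _
    _ = n := one_mul _
  obtain ⟨m, hm⟩ := this.dvd
  exact ⟨m, by linarith⟩

end LinearDiophantine

theorem Int.fract_intCast_mul_div_natCast (c : ℤ) (n d : ℕ) :
    Int.fract ((c : ℝ) * n / d) = ((c * n % d : ℤ) : ℝ) / d := by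
  rw [← Int.fract_div_intCast_eq_div_intCast_mod]
  push_cast
  rfl

/-- **Popoviciu's theorem.** For coprime positive integers `a, b` and a nonnegative
integer `n`, the number of representations of `n` as a nonnegative integer combination
of `a` and `b` is `n/(ab) − {b⁻¹n/a} − {a⁻¹n/b} + 1`, where `a⁻¹a ≡ 1 (mod b)` and
`b⁻¹b ≡ 1 (mod a)`. -/
theorem popoviciu (a b : ℕ) (ha : 0 < a) (hb : 0 < b) (hco : Nat.Coprime a b)
    (n : ℕ) (a' b' : ℤ)
    (ha' : a' * (a : ℤ) ≡ 1 [ZMOD (b : ℤ)]) (hb' : b' * (b : ℤ) ≡ 1 [ZMOD (a : ℤ)]) :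
    (Set.ncard {p : ℤ × ℤ | 0 ≤ p.1 ∧ 0 ≤ p.2 ∧
        (a : ℤ) * p.1 + (b : ℤ) * p.2 = (n : ℤ)} : ℝ) =
      (n : ℝ) / ((a : ℝ) * b) - Int.fract ((b' : ℝ) * n / a)
        - Int.fract ((a' : ℝ) * n / b) + 1 := by
  set r : ℤ := b' * n % a
  have hr : 0 ≤ r ∧ r < a := ⟨Int.emod_nonneg _ (by omega), Int.emod_lt_of_pos _ (by omega)⟩
  obtain ⟨m, hn⟩ := exists_eq_mul_add_mul_mul_emod hb' n
  have hm : a' * n ≡ m [ZMOD b] := calc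
    a' * n = a' * a * m + b * (a' * r) := by rw [hn]; ring
    _ ≡ 1 * m + 0 [ZMOD b] :=
      (ha'.mul_right _).add (Int.modEq_zero_iff_dvd.2 (dvd_mul_right _ _))
    _ = m := by ring
  have hcount := ncard_nonneg_solutions (by omega) (by omega) (Nat.isCoprime_iff_coprime.2 hco)
    hr.1 hr.2 (hn ▸ n.cast_nonneg)
  have hnR : (n : ℝ) = a * m + b * r := by exact_mod_cast hn
  have hmR : (m : ℝ) = b * (m / b : ℤ) + (m % b : ℤ) := by
    exact_mod_cast (Int.mul_ediv_add_emod m b).symm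
  rw [hn, ← Int.cast_natCast, hcount, Int.fract_intCast_mul_div_natCast,
    Int.fract_intCast_mul_div_natCast, hm, hnR, hmR]
  push_cast
  field_simp
  ring
end
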